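/- arXiv:1101.3034 — 2 statements merged into one kernel-verified Lean document; each statement's English description precedes it below -/
import Mathlib

section
/- Let V, V₁ : 𝕋 → M_{n×n}(ℂ) be measurable essentially bounded functions such that for a.e. z ∈ 𝕋, V(z) is a partial isometry with initial space N and V₁(z) is a partial isometry with initial space N₁, where N, N₁ are linear subspaces of ℂⁿ. If V·H²(N) = V₁·H²(N₁) as subspaces of L²(𝕋, ℂⁿ), then there exists a constant partial isometry W ∈ M_{n×n}(ℂ) with initial space N₁ and final space N such that V₁(z) = V(z)·W for a.e. z ∈ 𝕋. -/
open MeasureTheory Complex ContinuousLinearMap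
open scoped ComplexConjugate ENNReal NNReal

noncomputable section

/-! Basic setup: the unit circle `𝕋 = Circle ⊆ ℂ` with its Borel σ-algebra and its
normalized arc-length (Haar) probability measure `μc`; the spaces `L²(𝕋, ℂⁿ)` and the
Hardy spaces `H²(ℂⁿ)`; shifts, matrix- (i.e. operator-) valued functions on the circle,
their Fourier coefficients, inner functions and analytic extensions into the unit disk. -/

instance : MeasurableSpace Circle := borel Circle
instance : BorelSpace Circle := ⟨rfl⟩
instance : Fact (0 < 2 * Real.pi) := ⟨by positivity⟩

/-- The normalized arc-length (Haar) probability measure on the unit circle `𝕋`. -/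
def μc : Measure Circle :=
  Measure.map AddCircle.homeomorphCircle' AddCircle.haarAddCircle

/-- `ℂⁿ` as a (finite dimensional) Hilbert space. -/
abbrev Cn (n : ℕ) := EuclideanSpace ℂ (Fin n)

/-- `L²(𝕋, ℂⁿ)`. -/
abbrev L2 (n : ℕ) := Lp (Cn n) 2 μc

/-- The `k`-th Fourier coefficient `f̂(k) = ∫_𝕋 f(z) z̄ᵏ dμ` of a `ℂⁿ`-valued function. -/
def fc {n : ℕ} (f : Circle → Cn n) (k : ℤ) : Cn n :=
  ∫ z, ((starRingEnd ℂ) (z : ℂ)) ^ k • f z ∂μc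

/-- The Hardy space `H²(ℂⁿ)`, as a subset of `L²(𝕋, ℂⁿ)`: those `f` whose Fourier
coefficients `f̂(k)` vanish for all `k < 0`. -/
def H2 (n : ℕ) : Set (L2 n) :=
  {f | ∀ k : ℤ, k < 0 → fc (f : Circle → Cn n) k = 0}

/-- A set `M ⊆ L²(𝕋, ℂⁿ)` is invariant under the shift `U` (multiplication by the
coordinate function `z`): for every `f ∈ M`, the element `U f` (i.e. the element of `L²`
represented by `z ↦ z • f(z)`) again belongs to `M`. -/
def ShiftInv {n : ℕ} (M : Set (L2 n)) : Prop :=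
  ∀ f ∈ M, ∃ g ∈ M, (g : Circle → Cn n) =ᵐ[μc] fun z => (z : ℂ) • (f : Circle → Cn n) z

/-- Invariance of `M ⊆ L²(𝕋, ℂⁿ)` under the adjoint `U*` of the bilateral shift,
i.e. multiplication by `z̄`. -/
def ShiftStarInv {n : ℕ} (M : Set (L2 n)) : Prop :=
  ∀ f ∈ M, ∃ g ∈ M,
    (g : Circle → Cn n) =ᵐ[μc] fun z => ((starRingEnd ℂ) (z : ℂ)) • (f : Circle → Cn n) z

/-- The image `U M` of a set `M ⊆ L²(𝕋, ℂⁿ)` under the shift (multiplication by `z`). -/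
def Sset {n : ℕ} (M : Set (L2 n)) : Set (L2 n) :=
  {g | ∃ f ∈ M, (g : Circle → Cn n) =ᵐ[μc] fun z => (z : ℂ) • (f : Circle → Cn n) z}

/-- The image `Uᵏ M` of a set `M ⊆ L²(𝕋, ℂⁿ)` under the `k`-th power of the shift
(multiplication by `zᵏ`). -/
def shiftPow {n : ℕ} (k : ℕ) (M : Set (L2 n)) : Set (L2 n) :=
  {g | ∃ f ∈ M, (g : Circle → Cn n) =ᵐ[μc] fun z => ((z : ℂ) ^ k) • (f : Circle → Cn n) z}

/-- Multiplication of a set `A ⊆ L²(𝕋, ℂᵐ)` by a matrix- (operator-) valued function `G`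
on the circle: `G·A = {G·f : f ∈ A}` inside `L²(𝕋, ℂⁿ)`. -/
def mulSet {m n : ℕ} (G : Circle → (Cn m →L[ℂ] Cn n)) (A : Set (L2 m)) : Set (L2 n) :=
  {h | ∃ f ∈ A, (h : Circle → Cn n) =ᵐ[μc] fun z => G z ((f : Circle → Cn m) z)}

/-- The `k`-th matrix Fourier coefficient `Ĝ(k) = ∫_𝕋 G(z) z̄ᵏ dμ` of a matrix-valued
function on the circle. -/
def fcM {m n : ℕ} (G : Circle → (Cn m →L[ℂ] Cn n)) (k : ℤ) : Cn m →L[ℂ] Cn n :=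
  ∫ z, ((starRingEnd ℂ) (z : ℂ)) ^ k • G z ∂μc

/-- An inner function from `ℂᵐ` to `ℂⁿ`: a measurable, essentially bounded, matrix-valued
function `G` on `𝕋` with `G(z)*G(z) = Iₘ` for a.e. `z` and all negative matrix Fourier
coefficients vanishing. -/
def IsInner {m n : ℕ} (G : Circle → (Cn m →L[ℂ] Cn n)) : Prop :=
  Measurable G ∧ (∃ C : ℝ, ∀ᵐ z ∂μc, ‖G z‖ ≤ C) ∧
    (∀ᵐ z ∂μc, (ContinuousLinearMap.adjoint (G z)).comp (G z) = ContinuousLinearMap.id ℂ (Cn m)) ∧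
    (∀ k : ℤ, k < 0 → fcM G k = 0)

/-- The analytic extension `G(λ) = Σ_{k ≥ 0} Ĝ(k) λᵏ` of a matrix-valued function on the
circle to a point `λ` of the open unit disk. -/
def ext {m n : ℕ} (G : Circle → (Cn m →L[ℂ] Cn n)) (lam : ℂ) : Cn m →L[ℂ] Cn n :=
  ∑' k : ℕ, lam ^ k • fcM G (k : ℤ)

/-- The analytic extension `h(λ) = Σ_{k ≥ 0} ĥ(k) λᵏ` of a vector-valued function on the
circle to a point `λ` of the open unit disk. -/
def extV {n : ℕ} (h : Circle → Cn n) (lam : ℂ) : Cn n :=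
  ∑' k : ℕ, lam ^ k • fc h (k : ℤ)

/-- The orthogonal projection of `ℂⁿ` onto a subspace `N`, as an endomorphism of `ℂⁿ`. -/
def projOn {n : ℕ} (N : Submodule ℂ (Cn n)) : Cn n →L[ℂ] Cn n :=
  N.subtypeL.comp (N.orthogonalProjection)

/-- A bounded operator `p` on a Hilbert space is an orthogonal projection iff it is
idempotent and self-adjoint. -/
def IsOrthoProj {E : Type*} [NormedAddCommGroup E] [InnerProductSpace ℂ E] [CompleteSpace E]
    (p : E →L[ℂ] E) : Prop :=
  p.comp p = p ∧ ContinuousLinearMap.adjoint p = p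

/-- `H²(N)` for a subspace `N ⊆ ℂⁿ`: those `f ∈ H²(ℂⁿ)` with `f(z) ∈ N` for a.e. `z`. -/
def H2N {n : ℕ} (N : Submodule ℂ (Cn n)) : Set (L2 n) :=
  {f | f ∈ H2 n ∧ ∀ᵐ z ∂μc, (f : Circle → Cn n) z ∈ N}

/-! For `x ∈ N₁` the constant function `x` lies in `H²(N₁)`, so `V₁ x = V f` for some
`f ∈ H²(N)`. For `y ∈ N` the other inclusion gives `V y = V₁ g` with `g ∈ H²(N₁)`, and since
`V`, `V₁` are isometric on `N`, `N₁`, `⟪y, f⟫ = ⟪g, x⟫`: the positive Fourier coefficients of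
`f` are conjugates of negative ones of `g`, so they vanish and `f` is a constant. Hence
`V₁ = V X` and symmetrically `V = V₁ Y` for constant `X`, `Y`, so at almost every point the
partial isometries `V(z)`, `V₁(z)` have the same range, and `W = P_N X` is the required
partial isometry. -/

open scoped InnerProductSpace

section CStarRing

variable {R : Type*} [NonUnitalNormedRing R] [StarRing R] [CStarRing R]

theorem mul_star_mul_self_eq_self {a : R} (h : IsIdempotentElem (star a * a)) :
    a * (star a * a) = a := by
  set p := star a * a with hp
  have hps : star p = p := by rw [hp, star_mul, star_star]
  have hzero : star (a - a * p) * (a - a * p) = 0 := by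
    have hpp : p * p = p := h
    rw [star_sub, star_mul, hps]
    calc (star a - p * star a) * (a - a * p)
        = p - p * p - p * p + p * p * p := by rw [hp]; noncomm_ring
      _ = 0 := by rw [hpp, hpp]; abel
  have hnorm : ‖a - a * p‖ * ‖a - a * p‖ = 0 := by
    rw [← CStarRing.norm_star_mul_self, hzero, norm_zero]
  exact (sub_eq_zero.mp (norm_eq_zero.mp (mul_self_eq_zero.mp hnorm))).symm

variable {a a₁ p p₁ x y : R}

theorem mul_star_mul_eq_of_eq_mul (ha : star a * a = p) (hp : IsIdempotentElem p)
    (hx : a₁ = a * x) : a * (star a * a₁) = a₁ := by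
  rw [hx, ← mul_assoc, ← mul_assoc, mul_assoc a, mul_star_mul_self_eq_self (ha ▸ hp)]

/-- `hx` and `hy` say that `a` and `a₁` have the same range. -/
theorem partialIsometry_mul_of_mutual_factor (ha : star a * a = p) (ha₁ : star a₁ * a₁ = p₁)
    (hp : IsIdempotentElem p) (hp₁ : IsIdempotentElem p₁) (hx : a₁ = a * x) (hy : a = a₁ * y) :
    star (p * x) * (p * x) = p₁ ∧ p * x * star (p * x) = p ∧ a * (p * x) = a₁ := by
  have hpx : p * x = star a * a₁ := by rw [hx, ← mul_assoc, ha]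
  refine ⟨?_, ?_, ?_⟩
  · rw [hpx, star_mul, star_star, mul_assoc, mul_star_mul_eq_of_eq_mul ha hp hx, ha₁]
  · rw [hpx, star_mul, star_star, mul_assoc, mul_star_mul_eq_of_eq_mul ha₁ hp₁ hy, ha]
  · rw [hpx, mul_star_mul_eq_of_eq_mul ha hp hx]

end CStarRing

section Circle

theorem AddCircle.homeomorphCircle'_eq_toCircle (t : AddCircle (2 * Real.pi)) :
    AddCircle.homeomorphCircle' t = AddCircle.toCircle t := by
  induction t using QuotientAddGroup.induction_on with
  | H x =>
    rw [AddCircle.homeomorphCircle'_apply_mk, AddCircle.toCircle_apply_mk,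
      div_self Real.two_pi_pos.ne', one_mul]

theorem fourier_eq_conj_homeomorphCircle'_zpow (k : ℤ) (t : AddCircle (2 * Real.pi)) :
    fourier (-k) t = conj ((AddCircle.homeomorphCircle' t : ℂ)) ^ k := by
  rw [fourier_neg, fourier_apply, AddCircle.homeomorphCircle'_eq_toCircle,
    AddCircle.toCircle_zsmul, Circle.coe_zpow, map_zpow₀]

theorem measurePreserving_homeomorphCircle' :
    MeasurePreserving AddCircle.homeomorphCircle' AddCircle.haarAddCircle μc :=
  ⟨AddCircle.homeomorphCircle'.continuous.measurable, rfl⟩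

instance : IsProbabilityMeasure μc :=
  Measure.isProbabilityMeasure_map AddCircle.homeomorphCircle'.continuous.aemeasurable

theorem integral_conj_zpow_smul_eq_fourierCoeff {E : Type*} [NormedAddCommGroup E]
    [NormedSpace ℂ E] (f : Circle → E) (k : ℤ) :
    ∫ z, conj (z : ℂ) ^ k • f z ∂μc = fourierCoeff (f ∘ AddCircle.homeomorphCircle') k := by
  rw [μc, AddCircle.homeomorphCircle'.measurableEmbedding.integral_map, fourierCoeff]
  simp_rw [fourier_eq_conj_homeomorphCircle'_zpow, Function.comp_apply]

theorem AddCircle.ae_eq_zero_of_fourierCoeff_eq_zero {T : ℝ} [Fact (0 < T)]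
    {g : AddCircle T → ℂ} (hg : MemLp g 2 AddCircle.haarAddCircle)
    (h : ∀ k, fourierCoeff g k = 0) : g =ᵐ[AddCircle.haarAddCircle] 0 := by
  have hrepr : fourierBasis.repr (hg.toLp g) = 0 := by
    ext k
    rw [fourierBasis_repr, fourierCoeff_congr_ae hg.coeFn_toLp, h]
    rfl
  have hzero : hg.toLp g = 0 := fourierBasis.repr.map_eq_zero_iff.mp hrepr
  exact hg.coeFn_toLp.symm.trans (hzero ▸ Lp.coeFn_zero _ _ _)

theorem ae_eq_zero_of_integral_conj_zpow_smul_eq_zero {g : Circle → ℂ} (hg : MemLp g 2 μc)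
    (h : ∀ k : ℤ, ∫ z, conj (z : ℂ) ^ k • g z ∂μc = 0) : g =ᵐ[μc] 0 := by
  have hcomp := AddCircle.ae_eq_zero_of_fourierCoeff_eq_zero
    (hg.comp_measurePreserving measurePreserving_homeomorphCircle')
    fun k => by rw [← integral_conj_zpow_smul_eq_fourierCoeff, h]
  rw [Filter.EventuallyEq, μc, AddCircle.homeomorphCircle'.measurableEmbedding.ae_map_iff]
  exact hcomp

theorem norm_conj_coe_zpow (z : Circle) (k : ℤ) : ‖conj (z : ℂ) ^ k‖ = 1 := by
  rw [norm_zpow, RCLike.norm_conj, Circle.norm_coe, one_zpow]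

theorem MeasureTheory.Integrable.conj_zpow_smul {E : Type*} [NormedAddCommGroup E]
    [NormedSpace ℂ E] {f : Circle → E} (hf : Integrable f μc) (k : ℤ) :
    Integrable (fun z : Circle => conj (z : ℂ) ^ k • f z) μc := by
  have hcont : Continuous fun z : Circle => conj (z : ℂ) ^ k :=
    (continuous_conj.comp continuous_subtype_val).zpow₀ k fun z =>
      Or.inl ((map_ne_zero _).mpr (Circle.coe_ne_zero z))
  refine hf.mono (hcont.aestronglyMeasurable.smul hf.1) (.of_forall fun z => ?_)
  rw [norm_smul, norm_conj_coe_zpow, one_mul]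

end Circle

section FourierCoefficients

variable {n : ℕ}

theorem inner_fc {f : Circle → Cn n} (hf : Integrable f μc) (y : Cn n) (k : ℤ) :
    ⟪y, fc f k⟫_ℂ = ∫ z, conj (z : ℂ) ^ k • ⟪y, f z⟫_ℂ ∂μc := by
  simp_rw [fc, ← integral_inner (hf.conj_zpow_smul k), inner_smul_right, smul_eq_mul]

theorem ae_eq_zero_of_fc_eq_zero {f : Circle → Cn n} (hf : MemLp f 2 μc)
    (h : ∀ k, fc f k = 0) : f =ᵐ[μc] 0 := by
  have hcoord : ∀ i, (fun z => ⟪EuclideanSpace.single i 1, f z⟫_ℂ) =ᵐ[μc] 0 := fun i =>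
    ae_eq_zero_of_integral_conj_zpow_smul_eq_zero (hf.const_inner _) fun k => by
      rw [← inner_fc (hf.integrable one_le_two), h, inner_zero_right]
  filter_upwards [ae_all_iff.mpr hcoord] with z hz
  ext i
  simpa [EuclideanSpace.inner_single_left] using hz i

theorem fc_const (c : Cn n) (k : ℤ) : fc (fun _ => c) k = if k = 0 then c else 0 := by
  have h := integral_conj_zpow_smul_eq_fourierCoeff (fun _ => (1 : ℂ)) k
  simp_rw [smul_eq_mul, mul_one] at h
  have h1 : ((fun _ => (1 : ℂ)) ∘ AddCircle.homeomorphCircle') = fourier 0 := by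
    ext t; simp
  rw [fc, integral_smul_const, h, h1, fourierCoeff_fourier]
  split_ifs with hk <;> simp [hk]

theorem fc_sub {f g : Circle → Cn n} (hf : Integrable f μc) (hg : Integrable g μc) (k : ℤ) :
    fc (fun z => f z - g z) k = fc f k - fc g k := by
  simp_rw [fc, smul_sub]
  exact integral_sub (hf.conj_zpow_smul k) (hg.conj_zpow_smul k)

theorem ae_eq_const_of_fc_eq_zero {f : Circle → Cn n} (hf : MemLp f 2 μc)
    (h : ∀ k ≠ 0, fc f k = 0) : f =ᵐ[μc] fun _ => fc f 0 := by
  have hc := memLp_const (μ := μc) (p := 2) (fc f 0)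
  have hsub := ae_eq_zero_of_fc_eq_zero (hf.sub hc) fun k => by
    rw [show f - (fun _ => fc f 0) = fun z => f z - fc f 0 from rfl,
      fc_sub (hf.integrable one_le_two) (hc.integrable one_le_two), fc_const]
    rcases eq_or_ne k 0 with rfl | hk
    · simp
    · simp [hk, h k hk]
  filter_upwards [hsub] with z hz
  exact sub_eq_zero.mp hz

end FourierCoefficients

section PartialIsometry

variable {n : ℕ} {N : Submodule ℂ (Cn n)} {A : Cn n →L[ℂ] Cn n}

theorem isIdempotentElem_projOn (N : Submodule ℂ (Cn n)) : IsIdempotentElem (projOn N) :=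
  N.isIdempotentElem_starProjection

theorem projOn_eq_self {v : Cn n} (hv : v ∈ N) : projOn N v = v :=
  N.starProjection_eq_self_iff.mpr hv

theorem apply_projOn_of_adjoint_comp_eq (hA : adjoint A ∘L A = projOn N) (x : Cn n) :
    A (projOn N x) = A x := by
  have hA' : star A * A = projOn N := hA
  have h := mul_star_mul_self_eq_self (a := A) (hA' ▸ isIdempotentElem_projOn N)
  rw [hA'] at h
  exact DFunLike.congr_fun h x

theorem inner_apply_apply_of_adjoint_comp_eq (hA : adjoint A ∘L A = projOn N) (u : Cn n)
    {v : Cn n} (hv : v ∈ N) : ⟪A u, A v⟫_ℂ = ⟪u, v⟫_ℂ := by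
  rw [← adjoint_inner_right, ← comp_apply, hA, projOn_eq_self hv]

end PartialIsometry

section Hardy

variable {n : ℕ}

theorem fc_mem_of_ae_mem {N : Submodule ℂ (Cn n)} {f : Circle → Cn n}
    (hf : ∀ᵐ z ∂μc, f z ∈ N) (k : ℤ) : fc f k ∈ N := by
  by_cases hint : Integrable (fun z : Circle => conj (z : ℂ) ^ k • f z) μc
  · exact (N.restrictScalars ℝ).convex.integral_mem N.closed_of_finiteDimensional
      (hf.mono fun z hz => N.smul_mem _ hz) hint
  · rw [fc, integral_undef hint]
    exact N.zero_mem

theorem fc_congr_ae {f g : Circle → Cn n} (h : f =ᵐ[μc] g) (k : ℤ) : fc f k = fc g k :=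
  integral_congr_ae (h.mono fun z hz => by simp only [hz])

theorem conj_conj_zpow_neg (z : Circle) (k : ℤ) :
    conj (conj (z : ℂ) ^ (-k)) = conj (z : ℂ) ^ k := by
  rw [map_zpow₀, Complex.conj_conj, zpow_neg, ← inv_zpow, ← Circle.coe_inv,
    Circle.coe_inv_eq_conj]

theorem fc_eq_zero_of_forall_inner_eq {N : Submodule ℂ (Cn n)} {f : L2 n}
    (hfN : ∀ᵐ z ∂μc, (f : Circle → Cn n) z ∈ N) {x : Cn n}
    (h : ∀ y ∈ N, ∃ g ∈ H2 n,
      ∀ᵐ z ∂μc, ⟪y, (f : Circle → Cn n) z⟫_ℂ = ⟪(g : Circle → Cn n) z, x⟫_ℂ)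
    {k : ℤ} (hk : 0 < k) : fc (f : Circle → Cn n) k = 0 := by
  obtain ⟨g, hg, hfg⟩ := h _ (fc_mem_of_ae_mem hfN k)
  rw [← inner_self_eq_zero (𝕜 := ℂ)]
  calc ⟪fc (f : Circle → Cn n) k, fc (f : Circle → Cn n) k⟫_ℂ
      = ∫ z, conj (conj (z : ℂ) ^ (-k) • ⟪x, (g : Circle → Cn n) z⟫_ℂ) ∂μc := by
        rw [inner_fc ((Lp.memLp f).integrable one_le_two)]
        refine integral_congr_ae (hfg.mono fun z hz => ?_)
        dsimp only
        rw [hz, smul_eq_mul, smul_eq_mul, map_mul, conj_conj_zpow_neg, inner_conj_symm]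
    _ = conj ⟪x, fc (g : Circle → Cn n) (-k)⟫_ℂ := by
        rw [integral_conj, inner_fc ((Lp.memLp g).integrable one_le_two)]
    _ = 0 := by rw [hg (-k) (by omega), inner_zero_right, map_zero]

theorem const_mem_H2N {N : Submodule ℂ (Cn n)} {x : Cn n} (hx : x ∈ N) :
    (memLp_const (μ := μc) (p := 2) x).toLp _ ∈ H2N N := by
  have hcoe := (memLp_const (μ := μc) (p := 2) x).coeFn_toLp
  refine ⟨fun k hk => ?_, hcoe.mono fun z hz => hz ▸ hx⟩
  rw [fc_congr_ae hcoe, fc_const, if_neg hk.ne]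

end Hardy

section Representation

variable {n : ℕ} {N N₁ : Submodule ℂ (Cn n)} {V V₁ : Circle → (Cn n →L[ℂ] Cn n)}

theorem memLp_apply_of_bound (hV : Measurable V) (hVb : ∃ C : ℝ, ∀ᵐ z ∂μc, ‖V z‖ ≤ C)
    (x : Cn n) : MemLp (fun z => V z x) 2 μc := by
  obtain ⟨C, hC⟩ := hVb
  exact (memLp_top_of_bound (hV.apply_continuousLinearMap x).aestronglyMeasurable (C * ‖x‖)
    (hC.mono fun z hz => (V z).le_of_opNorm_le hz x)).mono_exponent le_top

theorem exists_mem_H2N_of_mulSet_subset (hV₁ : Measurable V₁)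
    (hV₁b : ∃ C : ℝ, ∀ᵐ z ∂μc, ‖V₁ z‖ ≤ C) (hsub : mulSet V₁ (H2N N₁) ⊆ mulSet V (H2N N))
    {x : Cn n} (hx : x ∈ N₁) :
    ∃ f ∈ H2N N, (fun z => V₁ z x) =ᵐ[μc] fun z => V z ((f : Circle → Cn n) z) := by
  have hVx := memLp_apply_of_bound hV₁ hV₁b x
  have hmem : hVx.toLp _ ∈ mulSet V₁ (H2N N₁) := by
    refine ⟨_, const_mem_H2N hx, ?_⟩
    filter_upwards [hVx.coeFn_toLp, (memLp_const (μ := μc) (p := 2) x).coeFn_toLp]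
      with z h1 h2
    rw [h1, h2]
  obtain ⟨f, hf, hfe⟩ := hsub hmem
  exact ⟨f, hf, hVx.coeFn_toLp.symm.trans hfe⟩

end Representation

theorem exists_ae_eq_comp_of_forall_exists_ae_apply_eq {Ω 𝕜 E F G : Type*}
    [MeasurableSpace Ω] {μ : Measure Ω} [NontriviallyNormedField 𝕜] [CompleteSpace 𝕜]
    [NormedAddCommGroup E] [NormedSpace 𝕜 E] [FiniteDimensional 𝕜 E]
    [NormedAddCommGroup F] [NormedSpace 𝕜 F] [NormedAddCommGroup G] [NormedSpace 𝕜 G]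
    {T : Ω → E →L[𝕜] F} {S : Ω → G →L[𝕜] F} (h : ∀ x, ∃ c, ∀ᵐ ω ∂μ, T ω x = S ω c) :
    ∃ X : E →L[𝕜] G, ∀ᵐ ω ∂μ, T ω = S ω ∘L X := by
  let b := Module.finBasis 𝕜 E
  choose c hc using fun i => h (b i)
  refine ⟨LinearMap.toContinuousLinearMap (b.constr 𝕜 c),
    (ae_all_iff.mpr hc).mono fun ω hω => ?_⟩
  refine ContinuousLinearMap.coe_injective (b.ext fun i => ?_)
  simp [hω i]

section Uniqueness

variable {n : ℕ} {N N₁ : Submodule ℂ (Cn n)} {V V₁ : Circle → (Cn n →L[ℂ] Cn n)}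

theorem exists_ae_apply_eq_apply_const (hV : Measurable V) (hV₁ : Measurable V₁)
    (hVb : ∃ C : ℝ, ∀ᵐ z ∂μc, ‖V z‖ ≤ C) (hV₁b : ∃ C : ℝ, ∀ᵐ z ∂μc, ‖V₁ z‖ ≤ C)
    (hVp : ∀ᵐ z ∂μc, adjoint (V z) ∘L V z = projOn N)
    (hV₁p : ∀ᵐ z ∂μc, adjoint (V₁ z) ∘L V₁ z = projOn N₁)
    (heq : mulSet V (H2N N) = mulSet V₁ (H2N N₁)) (x : Cn n) :
    ∃ c : Cn n, ∀ᵐ z ∂μc, V₁ z x = V z c := by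
  set x' := projOn N₁ x
  have hx' : x' ∈ N₁ := N₁.starProjection_apply_mem x
  obtain ⟨f, hf, hfV⟩ := exists_mem_H2N_of_mulSet_subset hV₁ hV₁b heq.symm.subset hx'
  have hpos : ∀ k > 0, fc (f : Circle → Cn n) k = 0 := fun k hk => by
    refine fc_eq_zero_of_forall_inner_eq (x := x') hf.2 (fun y hy => ?_) hk
    obtain ⟨g, hg, hgV⟩ := exists_mem_H2N_of_mulSet_subset hV hVb heq.subset hy
    refine ⟨g, hg.1, ?_⟩
    filter_upwards [hVp, hV₁p, hfV, hgV, hf.2, hg.2] with z h1 h2 h3 h4 h5 h6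
    calc ⟪y, (f : Circle → Cn n) z⟫_ℂ = ⟪V z y, V z ((f : Circle → Cn n) z)⟫_ℂ :=
          (inner_apply_apply_of_adjoint_comp_eq h1 y h5).symm
      _ = ⟪V₁ z ((g : Circle → Cn n) z), V₁ z x'⟫_ℂ := by rw [h3, h4]
      _ = ⟪(g : Circle → Cn n) z, x'⟫_ℂ := inner_apply_apply_of_adjoint_comp_eq h2 _ hx'
  have hconst := ae_eq_const_of_fc_eq_zero (Lp.memLp f) fun k hk =>
    (lt_or_gt_of_ne hk).elim (hf.1 k) (hpos k)
  refine ⟨fc (f : Circle → Cn n) 0, ?_⟩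
  filter_upwards [hV₁p, hfV, hconst] with z h1 h2 h3
  rw [← apply_projOn_of_adjoint_comp_eq h1, h2, h3]

end Uniqueness

/-- **Uniqueness in the generalized Beurling theorem.** If `V, V₁` are measurable
essentially bounded matrix-valued functions which are a.e. partial isometries with initial
spaces `N, N₁` respectively, and `V·H²(N) = V₁·H²(N₁)`, then `V₁ = V·W` a.e. for some
constant partial isometry `W` with initial space `N₁` and final space `N`. -/
theorem beurling_generalized_uniqueness {n : ℕ} (N N₁ : Submodule ℂ (Cn n))
    (V V₁ : Circle → (Cn n →L[ℂ] Cn n)) (hV : Measurable V) (hV₁ : Measurable V₁)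
    (hVb : ∃ C : ℝ, ∀ᵐ z ∂μc, ‖V z‖ ≤ C) (hV₁b : ∃ C : ℝ, ∀ᵐ z ∂μc, ‖V₁ z‖ ≤ C)
    (hVp : ∀ᵐ z ∂μc, (ContinuousLinearMap.adjoint (V z)).comp (V z) = projOn N)
    (hV₁p : ∀ᵐ z ∂μc, (ContinuousLinearMap.adjoint (V₁ z)).comp (V₁ z) = projOn N₁)
    (heq : mulSet V (H2N N) = mulSet V₁ (H2N N₁)) :
    ∃ W : Cn n →L[ℂ] Cn n,
      (ContinuousLinearMap.adjoint W).comp W = projOn N₁ ∧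
      W.comp (ContinuousLinearMap.adjoint W) = projOn N ∧
      ∀ᵐ z ∂μc, V₁ z = (V z).comp W := by
  obtain ⟨X, hX⟩ := exists_ae_eq_comp_of_forall_exists_ae_apply_eq
    (exists_ae_apply_eq_apply_const hV hV₁ hVb hV₁b hVp hV₁p heq)
  obtain ⟨Y, hY⟩ := exists_ae_eq_comp_of_forall_exists_ae_apply_eq
    (exists_ae_apply_eq_apply_const hV₁ hV hV₁b hVb hV₁p hVp heq.symm)
  have hW : ∀ᵐ z ∂μc, star (projOn N * X) * (projOn N * X) = projOn N₁ ∧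
      projOn N * X * star (projOn N * X) = projOn N ∧ V z * (projOn N * X) = V₁ z := by
    filter_upwards [hVp, hV₁p, hX, hY] with z h1 h2 h3 h4
    exact partialIsometry_mul_of_mutual_factor h1 h2 (isIdempotentElem_projOn N)
      (isIdempotentElem_projOn N₁) h3 h4
  obtain ⟨z₀, hW₁, hW₂, -⟩ := hW.exists
  exact ⟨projOn N * X, hW₁, hW₂, hW.mono fun z hz => hz.2.2.symm⟩
end
end

section
/- Let n be a positive integer and let {p_t}_{t∈[0,1]} be a family of orthogonal projections on H²(ℂⁿ) such that: (i) t ↦ p_t is continuous in operator norm, and (ii) for every t ∈ [0,1] the range p_t H²(ℂⁿ) is invariant under the unilateral shift S. For each t let W_t := (p_t H²(ℂⁿ)) ∩ (S(p_t H²(ℂⁿ)))⊥ be the wandering subspace of the invariant subspace p_t H²(ℂⁿ). Then the function t ↦ dim_ℂ W_t is constant on [0,1]. -/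
open MeasureTheory Complex ContinuousLinearMap
open scoped ComplexConjugate ENNReal NNReal

noncomputable section

/-- The wandering subspace `M ∩ (S M)ᗮ` of a subspace `M` (given as a subset that is in
fact a subspace, we pass to spans, which does not change anything for subspaces). -/
def wander {n : ℕ} (M : Set (L2 n)) : Submodule ℂ (L2 n) :=
  Submodule.span ℂ M ⊓ (Submodule.span ℂ (Sset M))ᗮ

/-! If `P` is an orthogonal projection whose range is invariant under the bilateral shift `U`,
then `T = U P + (1 - P)` is an isometry and `ker T*` is exactly the wandering subspace
`ran P ⊖ U ran P`. For isometries with `‖T - T'‖ < 1` the map `x ↦ x - T' T'* x` embeds `ker T*`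
into `ker T'*`, and symmetrically, so `dim ker T*` is locally constant along a norm-continuous
path of isometries, hence constant on the connected interval `[0, 1]`. -/

open scoped InnerProductSpace

section WanderingSubspace

variable {𝕜 E : Type*} [RCLike 𝕜] [NormedAddCommGroup E] [InnerProductSpace 𝕜 E] [CompleteSpace E]

theorem IsStarProjection.apply_apply {P : E →L[𝕜] E} (hP : IsStarProjection P) (x : E) :
    P (P x) = P x :=
  congr($(hP.isIdempotentElem) x)

theorem IsStarProjection.inner_apply_sub_apply {P : E →L[𝕜] E} (hP : IsStarProjection P)
    (x y : E) : ⟪P y, x - P x⟫_𝕜 = 0 := by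
  rw [← adjoint_inner_right, hP.isSelfAdjoint.adjoint_eq, map_sub, hP.apply_apply, sub_self,
    inner_zero_right]

/-- `x ↦ x - T' T'† x` embeds `ker T†` into `ker T'†`: a nonzero `x ∈ ker T†` in its kernel
would satisfy `‖x‖ = ‖T'† x‖ = ‖(T'† - T†) x‖ < ‖x‖`. -/
theorem rank_ker_adjoint_le_of_norm_sub_lt_one {T T' : E →L[𝕜] E}
    (hT' : ∀ x, ‖T' x‖ = ‖x‖) (hd : ‖T - T'‖ < 1) :
    Module.rank 𝕜 (adjoint T).ker ≤ Module.rank 𝕜 (adjoint T').ker := by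
  have hT'adj : adjoint T' ∘L T' = 1 := (norm_map_iff_adjoint_comp_self T').mp hT'
  let f : E →L[𝕜] E := 1 - T' ∘L adjoint T'
  have hf : ∀ x ∈ (adjoint T).ker, f x ∈ (adjoint T').ker := fun x _ => by
    simp [f, ← comp_apply (adjoint T') T', hT'adj]
  refine LinearMap.rank_le_of_injective ((f : E →ₗ[𝕜] E).restrict hf) ?_
  rw [← LinearMap.ker_eq_bot, LinearMap.ker_eq_bot']
  rintro ⟨x, hx⟩ hfx
  have hx_eq : x = T' (adjoint T' x) := sub_eq_zero.mp congr(Subtype.val $hfx)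
  have hnorm : ‖x‖ ≤ ‖T - T'‖ * ‖x‖ :=
    calc ‖x‖ = ‖T' (adjoint T' x)‖ := congrArg norm hx_eq
      _ = ‖adjoint T' x - adjoint T x‖ := by rw [hT', show adjoint T x = 0 from hx, sub_zero]
      _ = ‖adjoint (T' - T) x‖ := by rw [map_sub, sub_apply]
      _ ≤ ‖T - T'‖ * ‖x‖ := by
            rw [← norm_neg (T - T'), neg_sub, ← LinearIsometryEquiv.norm_map adjoint (T' - T)]
            exact le_opNorm _ _
  have hx0 : ‖x‖ = 0 := by nlinarith [norm_nonneg x]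
  exact Subtype.ext (norm_eq_zero.mp hx0)

theorem isLocallyConstant_rank_ker_adjoint {X : Type*} [TopologicalSpace X] {T : X → E →L[𝕜] E}
    (hT : Continuous T) (hiso : ∀ t x, ‖T t x‖ = ‖x‖) :
    IsLocallyConstant fun t => Module.rank 𝕜 (adjoint (T t)).ker := by
  rw [IsLocallyConstant.iff_exists_open]
  intro t
  refine ⟨{s | ‖T s - T t‖ < 1}, isOpen_lt (hT.sub continuous_const).norm continuous_const,
    by simp, fun s hs => le_antisymm ?_ ?_⟩
  · exact rank_ker_adjoint_le_of_norm_sub_lt_one (hiso t) hs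
  · refine rank_ker_adjoint_le_of_norm_sub_lt_one (hiso s) ?_
    rwa [← norm_neg, neg_sub]

def wanderingSubspace (V : E →L[𝕜] E) (K : Submodule 𝕜 E) : Submodule 𝕜 E :=
  K ⊓ (K.map (V : E →ₗ[𝕜] E))ᗮ

def shiftOnRange (V P : E →L[𝕜] E) : E →L[𝕜] E :=
  V ∘L P + (1 - P)

variable {V P : E →L[𝕜] E}

theorem norm_shiftOnRange_apply (hV : ∀ x, ‖V x‖ = ‖x‖) (hP : IsStarProjection P)
    (hVP : Set.MapsTo V P.range P.range) (x : E) : ‖shiftOnRange V P x‖ = ‖x‖ := by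
  obtain ⟨y, hy⟩ := hVP ⟨x, rfl⟩
  rw [coe_coe] at hy
  have h₁ : ⟪V (P x), x - P x⟫_𝕜 = 0 := by rw [← hy]; exact hP.inner_apply_sub_apply x y
  have h₂ : ⟪P x, x - P x⟫_𝕜 = 0 := hP.inner_apply_sub_apply x x
  have hsq : ‖shiftOnRange V P x‖ ^ 2 = ‖x‖ ^ 2 := by
    rw [shiftOnRange, add_apply, comp_apply, sub_apply, one_apply_eq_self, sq,
      norm_add_sq_eq_norm_sq_add_norm_sq_of_inner_eq_zero _ _ h₁, hV,
      ← norm_add_sq_eq_norm_sq_add_norm_sq_of_inner_eq_zero _ _ h₂, add_sub_cancel, sq]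
  exact (sq_eq_sq₀ (norm_nonneg _) (norm_nonneg _)).mp hsq

theorem mem_orthogonal_map_range_iff (hP : IsSelfAdjoint P) {x : E} :
    x ∈ (P.range.map (V : E →ₗ[𝕜] E))ᗮ ↔ P (adjoint V x) = 0 := by
  simp only [Submodule.mem_orthogonal, Submodule.mem_map, LinearMap.mem_range,
    forall_exists_index, and_imp, forall_apply_eq_imp_iff, coe_coe]
  simp_rw [← adjoint_inner_right, hP.adjoint_eq]
  exact ⟨fun h => inner_self_eq_zero.mp (h _), fun h z => by rw [h, inner_zero_right]⟩

theorem adjoint_shiftOnRange (hP : IsSelfAdjoint P) :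
    adjoint (shiftOnRange V P) = P ∘L adjoint V + (1 - P) := by
  rw [shiftOnRange, map_add, adjoint_comp, map_sub, hP.adjoint_eq, adjoint_one]

theorem ker_adjoint_shiftOnRange (hP : IsStarProjection P) :
    (adjoint (shiftOnRange V P)).ker = wanderingSubspace V P.range := by
  ext x
  rw [LinearMap.mem_ker, coe_coe, adjoint_shiftOnRange hP.isSelfAdjoint, wanderingSubspace,
    Submodule.mem_inf, mem_orthogonal_map_range_iff hP.isSelfAdjoint]
  simp only [add_apply, comp_apply, sub_apply, one_apply_eq_self]
  constructor
  · intro hx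
    have hPV : P (adjoint V x) = 0 := by
      simpa only [map_add, map_sub, hP.apply_apply, sub_self, add_zero, map_zero] using
        congr(P $hx)
    rw [hPV, zero_add, sub_eq_zero] at hx
    exact ⟨⟨x, hx.symm⟩, hPV⟩
  · rintro ⟨⟨y, rfl⟩, hPV⟩
    rw [coe_coe] at hPV ⊢
    rw [hPV, hP.apply_apply, zero_add, sub_self]

theorem isLocallyConstant_rank_wanderingSubspace {X : Type*} [TopologicalSpace X]
    (hV : ∀ x, ‖V x‖ = ‖x‖) {P : X → E →L[𝕜] E} (hPc : Continuous P)
    (hP : ∀ t, IsStarProjection (P t)) (hVP : ∀ t, Set.MapsTo V (P t).range (P t).range) :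
    IsLocallyConstant fun t => Module.rank 𝕜 (wanderingSubspace V (P t).range) := by
  have hT : Continuous fun t => shiftOnRange V (P t) :=
    (continuous_const.clm_comp hPc).add (continuous_const.sub hPc)
  convert isLocallyConstant_rank_ker_adjoint hT fun t => norm_shiftOnRange_apply hV (hP t) (hVP t)
    using 2 with t
  exact (LinearEquiv.ofEq _ _ (ker_adjoint_shiftOnRange (hP t))).rank_eq.symm

end WanderingSubspace

namespace MeasureTheory.Lp

variable {α 𝕜 E : Type*} [MeasurableSpace α] {μ : Measure α} {p : ℝ≥0∞}
  [NormedField 𝕜] [NormedAddCommGroup E] [NormedSpace 𝕜 E] {u : α → 𝕜}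

theorem memLp_smul_of_norm_eq_one (hum : AEStronglyMeasurable u μ) (hu : ∀ a, ‖u a‖ = 1)
    (f : Lp E p μ) : MemLp (fun a => u a • f a) p μ :=
  (Lp.memLp f).of_le (hum.smul (Lp.aestronglyMeasurable f))
    (.of_forall fun a => by rw [norm_smul, hu, one_mul])

variable [Fact (1 ≤ p)]

def unimodularMul (hum : AEStronglyMeasurable u μ) (hu : ∀ a, ‖u a‖ = 1) :
    Lp E p μ →ₗᵢ[𝕜] Lp E p μ where
  toFun f := (memLp_smul_of_norm_eq_one hum hu f).toLp _
  map_add' f g := by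
    rw [← MemLp.toLp_add]
    refine MemLp.toLp_congr (memLp_smul_of_norm_eq_one hum hu (f + g)) _ ?_
    filter_upwards [coeFn_add f g] with a ha
    rw [Pi.add_apply, ha, Pi.add_apply, smul_add]
  map_smul' c f := by
    rw [RingHom.id_apply, ← MemLp.toLp_const_smul]
    refine MemLp.toLp_congr (memLp_smul_of_norm_eq_one hum hu (c • f)) _ ?_
    filter_upwards [coeFn_smul c f] with a ha
    rw [Pi.smul_apply, ha, Pi.smul_apply, smul_comm]
  norm_map' f := by
    rw [LinearMap.coe_mk, AddHom.coe_mk, norm_toLp, norm_def]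
    congr 1
    exact eLpNorm_congr_norm_ae (.of_forall fun a => by rw [norm_smul, hu, one_mul])

theorem coeFn_unimodularMul (hum : AEStronglyMeasurable u μ) (hu : ∀ a, ‖u a‖ = 1)
    (f : Lp E p μ) : unimodularMul hum hu f =ᵐ[μ] fun a => u a • f a :=
  MemLp.coeFn_toLp (memLp_smul_of_norm_eq_one hum hu f)

end MeasureTheory.Lp

section HardySpace

variable {n : ℕ}

def shiftL2 (n : ℕ) : L2 n →ₗᵢ[ℂ] L2 n :=
  Lp.unimodularMul (u := fun z : Circle => (z : ℂ))
    (show Continuous fun z : Circle => (z : ℂ) from continuous_subtype_val).aestronglyMeasurable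
    Circle.norm_coe

theorem coeFn_shiftL2 (f : L2 n) : shiftL2 n f =ᵐ[μc] fun z => (z : ℂ) • f z :=
  Lp.coeFn_unimodularMul _ _ f

theorem Sset_eq_image (M : Set (L2 n)) : Sset M = shiftL2 n '' M := by
  ext g
  refine exists_congr fun f => and_congr_right fun _ => ?_
  rw [eq_comm, Lp.ext_iff]
  exact ⟨fun h => h.trans (coeFn_shiftL2 f).symm, fun h => h.trans (coeFn_shiftL2 f)⟩

theorem ShiftInv.mapsTo {M : Set (L2 n)} (h : ShiftInv M) : Set.MapsTo (shiftL2 n) M M := by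
  intro f hf
  obtain ⟨g, hg, hge⟩ := h f hf
  rwa [Lp.ext ((coeFn_shiftL2 f).trans hge.symm)]

theorem wander_eq_wanderingSubspace (M : Set (L2 n)) :
    wander M = wanderingSubspace (shiftL2 n).toContinuousLinearMap (Submodule.span ℂ M) := by
  rw [wander, wanderingSubspace, Sset_eq_image, ← Submodule.span_image]
  rfl

end HardySpace

theorem IsOrthoProj.isStarProjection {E : Type*} [NormedAddCommGroup E] [InnerProductSpace ℂ E]
    [CompleteSpace E] {p : E →L[ℂ] E} (h : IsOrthoProj p) : IsStarProjection p :=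
  ⟨h.1, h.2⟩

theorem Set.image_eq_range_of_idempotent {α : Type*} {f : α → α} (hf : ∀ x, f (f x) = f x)
    {s : Set α} (hs : Set.range f ⊆ s) : f '' s = Set.range f :=
  (Set.image_subset_range f s).antisymm fun _ ⟨x, hx⟩ => ⟨f x, hs ⟨x, rfl⟩, hx ▸ hf x⟩

theorem wandering_dimension_constant_general {n : ℕ}
    (p : Set.Icc (0 : ℝ) 1 → (L2 n →L[ℂ] L2 n))
    (hproj : ∀ t, IsOrthoProj (p t))
    (hrange : ∀ t, Set.range (p t) ⊆ H2 n)
    (hcont : Continuous p)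
    (hinv : ∀ t, ShiftInv ((p t) '' H2 n)) :
    ∃ d : Cardinal, ∀ t, Module.rank ℂ (wander ((p t) '' H2 n)) = d := by
  have hP t : IsStarProjection (p t) := (hproj t).isStarProjection
  have hM t : p t '' H2 n = (p t).range :=
    Set.image_eq_range_of_idempotent (hP t).apply_apply (hrange t)
  have hloc := isLocallyConstant_rank_wanderingSubspace
    (V := (shiftL2 n).toContinuousLinearMap) (shiftL2 n).norm_map hcont hP
    fun t => hM t ▸ (hinv t).mapsTo
  have hW t : wander (p t '' H2 n)
      = wanderingSubspace (shiftL2 n).toContinuousLinearMap (p t).range := by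
    rw [wander_eq_wanderingSubspace, hM, Submodule.span_eq]
  exact ⟨_, fun t => (LinearEquiv.ofEq _ _ (hW t)).rank_eq.trans
    (hloc.apply_eq_of_preconnectedSpace t ⟨0, by norm_num⟩)⟩

/-- Given an operator-norm continuous family `{p_t}_{t ∈ [0,1]}` of orthogonal projections
of `H²(ℂⁿ)` whose ranges `p_t H²(ℂⁿ)` are invariant under the unilateral shift `S`, the
dimension of the wandering subspace `W_t = (p_t H²(ℂⁿ)) ∩ (S (p_t H²(ℂⁿ)))ᗮ` is constant
in `t`. -/
theorem wandering_dimension_constant {n : ℕ} (hn : 0 < n)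
    (p : Set.Icc (0 : ℝ) 1 → (L2 n →L[ℂ] L2 n))
    (hproj : ∀ t, IsOrthoProj (p t))
    (hrange : ∀ t, Set.range (p t) ⊆ H2 n)
    (hcont : Continuous p)
    (hinv : ∀ t, ShiftInv ((p t) '' H2 n)) :
    ∃ d : Cardinal, ∀ t, Module.rank ℂ (wander ((p t) '' H2 n)) = d :=
  wandering_dimension_constant_general p hproj hrange hcont hinv
end
end
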